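/- The quotient ring 𝒜 = E'(ℝ_-)/J, where E'(ℝ_-) is the convolution ring of distributions with compact support in (−∞,0] and J = {φ ∈ E'(ℝ_-) : sup(supp φ) < 0}, is an integral domain. -/

import Mathlib

section SupportSupremum

variable {E : Type} [CommRing E] {r : E → ℝ} {J : Ideal E}

theorem notMem_iff_ne_zero_and_eq_zero (hr_nonpos : ∀ x : E, r x ≤ 0)
    (hJ : ∀ x : E, x ∈ J ↔ (x = 0 ∨ r x < 0)) (x : E) :
    x ∉ J ↔ x ≠ 0 ∧ r x = 0 := by
  rw [hJ, not_or, not_lt, (hr_nonpos x).ge_iff_eq]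

theorem mul_notMem_of_titchmarsh (hr_nonpos : ∀ x : E, r x ≤ 0)
    (titchmarsh : ∀ x y : E, x ≠ 0 → y ≠ 0 → x * y ≠ 0 ∧ r (x * y) = r x + r y)
    (hJ : ∀ x : E, x ∈ J ↔ (x = 0 ∨ r x < 0)) {x y : E} (hx : x ∉ J) (hy : y ∉ J) :
    x * y ∉ J := by
  rw [notMem_iff_ne_zero_and_eq_zero hr_nonpos hJ] at hx hy ⊢
  obtain ⟨hxy, hr_mul⟩ := titchmarsh x y hx.1 hy.1
  exact ⟨hxy, by rw [hr_mul, hx.2, hy.2, add_zero]⟩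

theorem isPrime_of_titchmarsh [Nontrivial E] (hr_nonpos : ∀ x : E, r x ≤ 0) (hr_one : r 1 = 0)
    (titchmarsh : ∀ x y : E, x ≠ 0 → y ≠ 0 → x * y ≠ 0 ∧ r (x * y) = r x + r y)
    (hJ : ∀ x : E, x ∈ J ↔ (x = 0 ∨ r x < 0)) :
    J.IsPrime := by
  refine Ideal.isPrime_iff.2 ⟨?_, fun {x y} hxy => ?_⟩
  · exact (Ideal.ne_top_iff_one J).2
      ((notMem_iff_ne_zero_and_eq_zero hr_nonpos hJ 1).2 ⟨one_ne_zero, hr_one⟩)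
  · by_contra! h
    exact mul_notMem_of_titchmarsh hr_nonpos titchmarsh hJ h.1 h.2 hxy

end SupportSupremum

/-- `E` models `E'(ℝ₋)` under convolution, with `r` the supremum of the support;
`titchmarsh` is the Titchmarsh convolution theorem. -/
theorem quotient_is_domain
    (E : Type) [CommRing E] [Nontrivial E]
    (r : E → ℝ)
    (hr_nonpos : ∀ x : E, r x ≤ 0)
    (hr_one : r 1 = 0)
    (titchmarsh : ∀ x y : E, x ≠ 0 → y ≠ 0 → x * y ≠ 0 ∧ r (x * y) = r x + r y)
    (J : Ideal E)
    (hJ : ∀ x : E, x ∈ J ↔ (x = 0 ∨ r x < 0)) :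
    IsDomain (E ⧸ J) :=
  (Ideal.Quotient.isDomain_iff_prime J).2 (isPrime_of_titchmarsh hr_nonpos hr_one titchmarsh hJ)
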